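/- arXiv:2511.00023 — 9 statements merged into one kernel-verified Lean document; each statement's English description precedes it below -/
import Mathlib

section
/- For every positive integer n, let B_h = [0,n] × [0,1] × [0,1] (the 1×1×n box lying on a long face) and B_v = [0,1] × [0,1] × [0,n] (the same box standing vertically). Then ∫_{B_h} z^{-1/2} dV = 2n and ∫_{B_v} z^{-1/2} dV = 2√n, so the ratio of the two drainage integrals equals √n; in particular this ratio tends to infinity as n → ∞, hence the Torricelli number of solids is unbounded. -/
open MeasureTheory Filter

/-- The `1 × 1 × n` box lying on a long face (long dimension horizontal). -/
def boxHorizontal (n : ℕ) : Set (Fin 3 → ℝ) :=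
  {p | p 0 ∈ Set.Icc (0 : ℝ) n ∧ p 1 ∈ Set.Icc (0 : ℝ) 1 ∧ p 2 ∈ Set.Icc (0 : ℝ) 1}

/-- The `1 × 1 × n` box standing vertically (long dimension along the `z`-axis). -/
def boxVertical (n : ℕ) : Set (Fin 3 → ℝ) :=
  {p | p 0 ∈ Set.Icc (0 : ℝ) 1 ∧ p 1 ∈ Set.Icc (0 : ℝ) 1 ∧ p 2 ∈ Set.Icc (0 : ℝ) n}

lemma sqrt_inv_integral (c : ℝ) (hc : 0 ≤ c) :
    (∫ x in Set.Icc (0:ℝ) c, (Real.sqrt x)⁻¹) = 2 * Real.sqrt c := by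
  rw [MeasureTheory.integral_Icc_eq_integral_Ioc,
    ← intervalIntegral.integral_of_le hc]
  rw [show (∫ x in (0:ℝ)..c, (Real.sqrt x)⁻¹) = ∫ x in (0:ℝ)..c, x ^ (-(1/2) : ℝ) from
    intervalIntegral.integral_congr fun x hx => by
      rw [Set.uIcc_of_le hc] at hx
      rw [Real.sqrt_eq_rpow, ← Real.rpow_neg hx.1]]
  rw [integral_rpow (Or.inl (by norm_num))]
  rw [Real.sqrt_eq_rpow]
  norm_num
  ring

lemma box_integral (a b c : ℝ) (ha : 0 ≤ a) (hb : 0 ≤ b) (hc : 0 ≤ c) :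
    (∫ p in {p : Fin 3 → ℝ | p 0 ∈ Set.Icc 0 a ∧ p 1 ∈ Set.Icc 0 b ∧ p 2 ∈ Set.Icc 0 c},
      (Real.sqrt (p 2))⁻¹) = a * b * (2 * Real.sqrt c) := by
  set S : Set (Fin 3 → ℝ) :=
    {p | p 0 ∈ Set.Icc 0 a ∧ p 1 ∈ Set.Icc 0 b ∧ p 2 ∈ Set.Icc 0 c} with hSdef
  have hS : MeasurableSet S := by
    apply MeasurableSet.inter (measurable_pi_apply 0 measurableSet_Icc)
    exact MeasurableSet.inter (measurable_pi_apply 1 measurableSet_Icc)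
      (measurable_pi_apply 2 measurableSet_Icc)
  set f : Fin 3 → ℝ → ℝ :=
    ![Set.indicator (Set.Icc 0 a) 1, Set.indicator (Set.Icc 0 b) 1,
      Set.indicator (Set.Icc 0 c) fun x => (Real.sqrt x)⁻¹] with hf
  have key : ∀ p : Fin 3 → ℝ,
      S.indicator (fun p => (Real.sqrt (p 2))⁻¹) p = ∏ i, f i (p i) := by
    intro p
    rw [Fin.prod_univ_three]
    simp only [hf, Matrix.cons_val_zero, Matrix.cons_val_one, Matrix.head_cons,
      Matrix.cons_val_two, Matrix.tail_cons]
    by_cases h : p ∈ S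
    · obtain ⟨h0, h1, h2⟩ := id h
      rw [Set.indicator_of_mem h, Set.indicator_of_mem h0, Set.indicator_of_mem h1,
        Set.indicator_of_mem h2, Pi.one_apply, Pi.one_apply, one_mul, one_mul]
    · rw [Set.indicator_of_notMem h]
      by_cases h0 : p 0 ∈ Set.Icc (0:ℝ) a
      · by_cases h1 : p 1 ∈ Set.Icc (0:ℝ) b
        · have h2 : p 2 ∉ Set.Icc (0:ℝ) c := fun h2 => h ⟨h0, h1, h2⟩
          rw [Set.indicator_of_notMem h2, mul_zero]
        · rw [Set.indicator_of_notMem h1, mul_zero, zero_mul]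
      · rw [Set.indicator_of_notMem h0, zero_mul, zero_mul]
  rw [← integral_indicator hS]
  calc (∫ p, S.indicator (fun p => (Real.sqrt (p 2))⁻¹) p)
      = ∫ p : Fin 3 → ℝ, ∏ i, f i (p i) := by simp_rw [key]
    _ = ∏ i, ∫ x, f i x := MeasureTheory.integral_fintype_prod_eq_prod f
    _ = a * b * (2 * Real.sqrt c) := by
        rw [Fin.prod_univ_three]
        simp only [hf, Matrix.cons_val_zero, Matrix.cons_val_one, Matrix.head_cons,
          Matrix.cons_val_two, Matrix.tail_cons]
        rw [MeasureTheory.integral_indicator measurableSet_Icc,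
          MeasureTheory.integral_indicator measurableSet_Icc,
          MeasureTheory.integral_indicator measurableSet_Icc,
          sqrt_inv_integral c hc]
        simp [Real.volume_Icc, ENNReal.toReal_ofReal ha, ENNReal.toReal_ofReal hb,
            max_eq_left ha, max_eq_left hb]

/-- For the `1 × 1 × n` box, the drainage integral `∫ z^{-1/2} dV` equals `2n` in the
horizontal position and `2√n` in the vertical position, so their ratio is `√n`; in
particular the ratio tends to infinity with `n`, hence the Torricelli number of solids
is unbounded. -/
theorem torricelli_number_unbounded :
    (∀ n : ℕ, 0 < n →
      (∫ p in boxHorizontal n, (Real.sqrt (p 2))⁻¹) = 2 * n ∧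
      (∫ p in boxVertical n, (Real.sqrt (p 2))⁻¹) = 2 * Real.sqrt n ∧
      (∫ p in boxHorizontal n, (Real.sqrt (p 2))⁻¹) /
        (∫ p in boxVertical n, (Real.sqrt (p 2))⁻¹) = Real.sqrt n) ∧
    Tendsto (fun n : ℕ =>
      (∫ p in boxHorizontal n, (Real.sqrt (p 2))⁻¹) /
        (∫ p in boxVertical n, (Real.sqrt (p 2))⁻¹)) atTop atTop := by
  have key : ∀ n : ℕ, 0 < n →
      (∫ p in boxHorizontal n, (Real.sqrt (p 2))⁻¹) = 2 * n ∧
      (∫ p in boxVertical n, (Real.sqrt (p 2))⁻¹) = 2 * Real.sqrt n ∧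
      (∫ p in boxHorizontal n, (Real.sqrt (p 2))⁻¹) /
        (∫ p in boxVertical n, (Real.sqrt (p 2))⁻¹) = Real.sqrt n := by
    intro n hn
    have hn0 : (0:ℝ) ≤ n := Nat.cast_nonneg n
    have hH : (∫ p in boxHorizontal n, (Real.sqrt (p 2))⁻¹) = 2 * n := by
      rw [show boxHorizontal n =
        {p : Fin 3 → ℝ | p 0 ∈ Set.Icc 0 (n:ℝ) ∧ p 1 ∈ Set.Icc 0 (1:ℝ) ∧
          p 2 ∈ Set.Icc 0 (1:ℝ)} from rfl,
        box_integral (n:ℝ) 1 1 hn0 zero_le_one zero_le_one, Real.sqrt_one]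
      ring
    have hV : (∫ p in boxVertical n, (Real.sqrt (p 2))⁻¹) = 2 * Real.sqrt n := by
      rw [show boxVertical n =
        {p : Fin 3 → ℝ | p 0 ∈ Set.Icc 0 (1:ℝ) ∧ p 1 ∈ Set.Icc 0 (1:ℝ) ∧
          p 2 ∈ Set.Icc 0 (n:ℝ)} from rfl,
        box_integral 1 1 (n:ℝ) zero_le_one zero_le_one hn0]
      ring
    refine ⟨hH, hV, ?_⟩
    have hs : Real.sqrt n ≠ 0 :=
      ne_of_gt (Real.sqrt_pos.2 (by exact_mod_cast hn))
    rw [hH, hV, div_eq_iff (by positivity)]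
    rw [show Real.sqrt n * (2 * Real.sqrt n) = 2 * (Real.sqrt n * Real.sqrt n) by ring,
      Real.mul_self_sqrt hn0]
  refine ⟨key, ?_⟩
  have hsqrt : Tendsto (fun n : ℕ => Real.sqrt n) atTop atTop := by
    have h1 : Tendsto (fun x : ℝ => x ^ (1/2 : ℝ)) atTop atTop :=
      tendsto_rpow_atTop (by norm_num)
    have h2 : Tendsto (fun n : ℕ => (n:ℝ)) atTop atTop := tendsto_natCast_atTop_atTop
    exact (h1.comp h2).congr fun n => (Real.sqrt_eq_rpow _).symm
  apply hsqrt.congr'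
  filter_upwards [eventually_gt_atTop 0] with n hn
  exact ((key n hn).2.2).symm
end

section
/- Let A : [0,√3] → ℝ be defined by A(h) = (3√3/2)h² for h ∈ [0, √3/3], A(h) = (3√3/2)(2√3·h − 1 − 2h²) for h ∈ [√3/3, 2√3/3], and A(h) = (3√3/2)(√3 − h)² for h ∈ [2√3/3, √3]. Then ∫₀^{√3} A(h)·h^{-1/2} dh = (8·3^{1/4}/5)·(1 + 3√3 − 4√2). -/
/-- The horizontal cross-sectional area function of a unit cube positioned with a big
diagonal (of length `√3`) vertical, the bottom vertex at height `0`. -/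
noncomputable def cubeDiagArea (h : ℝ) : ℝ :=
  if h ≤ Real.sqrt 3 / 3 then 3 * Real.sqrt 3 / 2 * h ^ 2
  else if h ≤ 2 * Real.sqrt 3 / 3 then
    3 * Real.sqrt 3 / 2 * (2 * Real.sqrt 3 * h - 1 - 2 * h ^ 2)
  else 3 * Real.sqrt 3 / 2 * (Real.sqrt 3 - h) ^ 2


open Real MeasureTheory intervalIntegral Set

noncomputable def q : ℝ := (3:ℝ) ^ ((1:ℝ)/4)

lemma hq : 0 < q := Real.rpow_pos_of_pos (by norm_num) _

lemma hq4 : q ^ 4 = 3 := by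
  rw [q, ← Real.rpow_natCast ((3:ℝ)^((1:ℝ)/4)) 4, ← Real.rpow_mul (by norm_num)]
  norm_num

lemma hs3 : Real.sqrt 3 = q ^ 2 := by
  have h2 : (q^2)^2 = 3 := by rw [← hq4]; ring
  rw [← h2, Real.sqrt_sq (by positivity)]

lemma hsa : Real.sqrt (Real.sqrt 3 / 3) = q^3 / 3 := by
  have h2 : (q^3/3)^2 = Real.sqrt 3 / 3 := by
    rw [hs3]; linear_combination (q^2/9) * hq4
  rw [← h2, Real.sqrt_sq (div_nonneg (pow_nonneg hq.le 3) (by norm_num))]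

lemma hsb : Real.sqrt (2 * Real.sqrt 3 / 3) = Real.sqrt 2 * q^3 / 3 := by
  have hr2 : Real.sqrt 2 ^ 2 = 2 := Real.sq_sqrt (by norm_num)
  have h2 : (Real.sqrt 2 * q^3/3)^2 = 2 * Real.sqrt 3 / 3 := by
    rw [hs3]; linear_combination (2*q^2/9) * hq4 + (q^6/9) * hr2
  rw [← h2, Real.sqrt_sq
    (div_nonneg (mul_nonneg (Real.sqrt_nonneg 2) (pow_nonneg hq.le 3)) (by norm_num))]

lemma hst : Real.sqrt (Real.sqrt 3) = q := by
  rw [hs3, Real.sqrt_sq hq.le]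

lemma rpow_half' {x : ℝ} (hx : 0 ≤ x) : x ^ ((1:ℝ)/2) = Real.sqrt x :=
  (Real.sqrt_eq_rpow x).symm

lemma rpow_neg_half' {x : ℝ} (hx : 0 < x) : x ^ (-((1:ℝ)/2)) = (Real.sqrt x)⁻¹ := by
  rw [Real.rpow_neg hx.le, rpow_half' hx.le]

lemma rpow_3half' {x : ℝ} (hx : 0 ≤ x) : x ^ ((3:ℝ)/2) = x * Real.sqrt x := by
  rcases hx.eq_or_lt with h | h
  · rw [← h, Real.zero_rpow (by norm_num), Real.sqrt_zero, mul_zero]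
  · rw [show (3:ℝ)/2 = 1 + 1/2 by norm_num, Real.rpow_add h, Real.rpow_one, rpow_half' hx]

lemma rpow_5half' {x : ℝ} (hx : 0 ≤ x) : x ^ ((5:ℝ)/2) = x^2 * Real.sqrt x := by
  rcases hx.eq_or_lt with h | h
  · rw [← h, Real.zero_rpow (by norm_num), Real.sqrt_zero, mul_zero]
  · rw [show (5:ℝ)/2 = 2 + 1/2 by norm_num, Real.rpow_add h, rpow_half' hx, Real.rpow_two]

lemma s3pos : (0:ℝ) < Real.sqrt 3 := Real.sqrt_pos.mpr (by norm_num)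
lemma s3sq : Real.sqrt 3 ^ 2 = 3 := Real.sq_sqrt (by norm_num)

lemma area_bot {h : ℝ} (h2 : h ≤ Real.sqrt 3 / 3) :
    cubeDiagArea h = 3 * Real.sqrt 3 / 2 * h ^ 2 := if_pos h2

lemma area_mid {h : ℝ} (h1 : Real.sqrt 3 / 3 ≤ h) (h2 : h ≤ 2 * Real.sqrt 3 / 3) :
    cubeDiagArea h = 3 * Real.sqrt 3 / 2 * (2 * Real.sqrt 3 * h - 1 - 2 * h ^ 2) := by
  unfold cubeDiagArea
  split_ifs with ha hb
  · have he : h = Real.sqrt 3 / 3 := le_antisymm ha h1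
    subst he
    linear_combination (-(Real.sqrt 3)/2) * s3sq
  · rfl

lemma area_top {h : ℝ} (h1 : 2 * Real.sqrt 3 / 3 ≤ h) :
    cubeDiagArea h = 3 * Real.sqrt 3 / 2 * (Real.sqrt 3 - h) ^ 2 := by
  unfold cubeDiagArea
  split_ifs with ha hb
  · linarith [s3pos]
  · have he : h = 2 * Real.sqrt 3 / 3 := le_antisymm hb h1
    subst he
    linear_combination (Real.sqrt 3/2) * s3sq
  · rfl

lemma heq1 : EqOn (fun h => cubeDiagArea h * (Real.sqrt h)⁻¹)
    (fun h => 3 * Real.sqrt 3 / 2 * h ^ ((3:ℝ)/2)) (uIcc 0 (Real.sqrt 3/3)) := by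
  intro h hh
  rw [uIcc_of_le (by positivity)] at hh
  obtain ⟨hh0, hh1⟩ := hh
  simp only
  rw [area_bot hh1, rpow_3half' hh0]
  rcases hh0.eq_or_lt with h0 | h0
  · rw [← h0]; simp
  · have hs0 : Real.sqrt h ≠ 0 := ne_of_gt (Real.sqrt_pos.mpr h0)
    have hs : Real.sqrt h * Real.sqrt h = h := Real.mul_self_sqrt hh0
    field_simp
    linear_combination (-1) * hs

lemma heq2 : EqOn (fun h => cubeDiagArea h * (Real.sqrt h)⁻¹)
    (fun h => 3 * Real.sqrt 3 / 2 *
      (2 * Real.sqrt 3 * h ^ ((1:ℝ)/2) - h ^ (-((1:ℝ)/2)) - 2 * h ^ ((3:ℝ)/2)))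
    (uIcc (Real.sqrt 3/3) (2 * Real.sqrt 3/3)) := by
  intro h hh
  rw [uIcc_of_le (by linarith [s3pos])] at hh
  have h0 : 0 < h := lt_of_lt_of_le (by positivity) hh.1
  simp only
  rw [area_mid hh.1 hh.2, rpow_3half' h0.le, rpow_half' h0.le, rpow_neg_half' h0]
  have hs0 : Real.sqrt h ≠ 0 := ne_of_gt (Real.sqrt_pos.mpr h0)
  have hs : Real.sqrt h * Real.sqrt h = h := Real.mul_self_sqrt h0.le
  field_simp
  linear_combination (2*h - 2*Real.sqrt 3) * hs

lemma heq3 : EqOn (fun h => cubeDiagArea h * (Real.sqrt h)⁻¹)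
    (fun h => 3 * Real.sqrt 3 / 2 *
      (3 * h ^ (-((1:ℝ)/2)) - 2 * Real.sqrt 3 * h ^ ((1:ℝ)/2) + h ^ ((3:ℝ)/2)))
    (uIcc (2 * Real.sqrt 3/3) (Real.sqrt 3)) := by
  intro h hh
  rw [uIcc_of_le (by linarith [s3pos])] at hh
  have h0 : 0 < h := lt_of_lt_of_le (by positivity) hh.1
  simp only
  rw [area_top hh.1, rpow_3half' h0.le, rpow_half' h0.le, rpow_neg_half' h0]
  have hs0 : Real.sqrt h ≠ 0 := ne_of_gt (Real.sqrt_pos.mpr h0)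
  have hs : Real.sqrt h * Real.sqrt h = h := Real.mul_self_sqrt h0.le
  field_simp
  linear_combination s3sq + (2*Real.sqrt 3 - h) * hs

lemma fint1 : IntervalIntegrable (fun h => cubeDiagArea h * (Real.sqrt h)⁻¹) volume
    0 (Real.sqrt 3/3) := by
  have g1int : IntervalIntegrable (fun h : ℝ => 3 * Real.sqrt 3 / 2 * h ^ ((3:ℝ)/2))
      volume 0 (Real.sqrt 3/3) := (intervalIntegrable_rpow' (by norm_num)).const_mul _
  rw [intervalIntegrable_iff]
  exact (intervalIntegrable_iff.mp g1int).congr_fun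
    (fun x hx => (heq1 (uIoc_subset_uIcc hx)).symm) measurableSet_uIoc

lemma g2int : IntervalIntegrable (fun h : ℝ => 3 * Real.sqrt 3 / 2 *
    (2 * Real.sqrt 3 * h ^ ((1:ℝ)/2) - h ^ (-((1:ℝ)/2)) - 2 * h ^ ((3:ℝ)/2))) volume
    (Real.sqrt 3/3) (2 * Real.sqrt 3/3) :=
  ((((intervalIntegrable_rpow' (by norm_num)).const_mul _).sub
    (intervalIntegrable_rpow' (by norm_num))).sub
    ((intervalIntegrable_rpow' (by norm_num)).const_mul _)).const_mul _

lemma fint2 : IntervalIntegrable (fun h => cubeDiagArea h * (Real.sqrt h)⁻¹) volume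
    (Real.sqrt 3/3) (2 * Real.sqrt 3/3) := by
  rw [intervalIntegrable_iff]
  exact (intervalIntegrable_iff.mp g2int).congr_fun
    (fun x hx => (heq2 (uIoc_subset_uIcc hx)).symm) measurableSet_uIoc

lemma g3int : IntervalIntegrable (fun h : ℝ => 3 * Real.sqrt 3 / 2 *
    (3 * h ^ (-((1:ℝ)/2)) - 2 * Real.sqrt 3 * h ^ ((1:ℝ)/2) + h ^ ((3:ℝ)/2))) volume
    (2 * Real.sqrt 3/3) (Real.sqrt 3) :=
  ((((intervalIntegrable_rpow' (by norm_num)).const_mul _).sub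
    ((intervalIntegrable_rpow' (by norm_num)).const_mul _)).add
    (intervalIntegrable_rpow' (by norm_num))).const_mul _

lemma fint3 : IntervalIntegrable (fun h => cubeDiagArea h * (Real.sqrt h)⁻¹) volume
    (2 * Real.sqrt 3/3) (Real.sqrt 3) := by
  rw [intervalIntegrable_iff]
  exact (intervalIntegrable_iff.mp g3int).congr_fun
    (fun x hx => (heq3 (uIoc_subset_uIcc hx)).symm) measurableSet_uIoc

lemma I1 : ∫ h in (0:ℝ)..(Real.sqrt 3/3), cubeDiagArea h * (Real.sqrt h)⁻¹ = q / 5 := by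
  rw [integral_congr heq1, intervalIntegral.integral_const_mul, integral_rpow (Or.inl (by norm_num))]
  rw [show (3:ℝ)/2 + 1 = 5/2 by norm_num, Real.zero_rpow (by norm_num),
    rpow_5half' (by positivity : (0:ℝ) ≤ Real.sqrt 3/3), hsa, hs3]
  linear_combination ((1/15)*q + (1/45)*q^5) * hq4

lemma I2 : ∫ h in (Real.sqrt 3/3)..(2*Real.sqrt 3/3), cubeDiagArea h * (Real.sqrt h)⁻¹
    = q * (7 - 3 * Real.sqrt 2) / 5 := by
  have i1 : IntervalIntegrable (fun h:ℝ => h ^ ((1:ℝ)/2)) volume (Real.sqrt 3/3) (2*Real.sqrt 3/3) :=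
    intervalIntegrable_rpow' (by norm_num)
  have i2 : IntervalIntegrable (fun h:ℝ => h ^ (-((1:ℝ)/2))) volume (Real.sqrt 3/3) (2*Real.sqrt 3/3) :=
    intervalIntegrable_rpow' (by norm_num)
  have i3 : IntervalIntegrable (fun h:ℝ => h ^ ((3:ℝ)/2)) volume (Real.sqrt 3/3) (2*Real.sqrt 3/3) :=
    intervalIntegrable_rpow' (by norm_num)
  rw [integral_congr heq2, intervalIntegral.integral_const_mul,
    integral_sub ((i1.const_mul _).sub i2) (i3.const_mul 2),
    integral_sub (i1.const_mul _) i2, intervalIntegral.integral_const_mul, intervalIntegral.integral_const_mul,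
    integral_rpow (Or.inl (by norm_num)), integral_rpow (Or.inl (by norm_num)),
    integral_rpow (Or.inl (by norm_num))]
  rw [show (1:ℝ)/2 + 1 = 3/2 by norm_num, show -((1:ℝ)/2) + 1 = 1/2 by norm_num,
    show (3:ℝ)/2 + 1 = 5/2 by norm_num,
    rpow_5half' (by positivity : (0:ℝ) ≤ 2*Real.sqrt 3/3),
    rpow_5half' (by positivity : (0:ℝ) ≤ Real.sqrt 3/3),
    rpow_3half' (by positivity : (0:ℝ) ≤ 2*Real.sqrt 3/3),
    rpow_3half' (by positivity : (0:ℝ) ≤ Real.sqrt 3/3),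
    rpow_half' (by positivity : (0:ℝ) ≤ 2*Real.sqrt 3/3),
    rpow_half' (by positivity : (0:ℝ) ≤ Real.sqrt 3/3),
    hsa, hsb, hs3]
  linear_combination ((7/15)*q + (-1/5)*q*Real.sqrt 2 + (-8/45)*q^5 + (4/15)*q^5*Real.sqrt 2) * hq4

lemma I3 : ∫ h in (2*Real.sqrt 3/3)..(Real.sqrt 3), cubeDiagArea h * (Real.sqrt h)⁻¹
    = (24 * q^3 - 29 * Real.sqrt 2 * q) / 5 := by
  have i1 : IntervalIntegrable (fun h:ℝ => h ^ ((1:ℝ)/2)) volume (2*Real.sqrt 3/3) (Real.sqrt 3) :=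
    intervalIntegrable_rpow' (by norm_num)
  have i2 : IntervalIntegrable (fun h:ℝ => h ^ (-((1:ℝ)/2))) volume (2*Real.sqrt 3/3) (Real.sqrt 3) :=
    intervalIntegrable_rpow' (by norm_num)
  have i3 : IntervalIntegrable (fun h:ℝ => h ^ ((3:ℝ)/2)) volume (2*Real.sqrt 3/3) (Real.sqrt 3) :=
    intervalIntegrable_rpow' (by norm_num)
  rw [integral_congr heq3, intervalIntegral.integral_const_mul,
    integral_add ((i2.const_mul _).sub (i1.const_mul _)) i3,
    integral_sub (i2.const_mul _) (i1.const_mul _), intervalIntegral.integral_const_mul, intervalIntegral.integral_const_mul,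
    integral_rpow (Or.inl (by norm_num)), integral_rpow (Or.inl (by norm_num)),
    integral_rpow (Or.inl (by norm_num))]
  rw [show (1:ℝ)/2 + 1 = 3/2 by norm_num, show -((1:ℝ)/2) + 1 = 1/2 by norm_num,
    show (3:ℝ)/2 + 1 = 5/2 by norm_num,
    rpow_5half' (by positivity : (0:ℝ) ≤ 2*Real.sqrt 3/3),
    rpow_5half' (Real.sqrt_nonneg 3),
    rpow_3half' (by positivity : (0:ℝ) ≤ 2*Real.sqrt 3/3),
    rpow_3half' (Real.sqrt_nonneg 3),
    rpow_half' (by positivity : (0:ℝ) ≤ 2*Real.sqrt 3/3),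
    rpow_half' (Real.sqrt_nonneg 3),
    hsb, hst, hs3]
  linear_combination ((-29/15)*q*Real.sqrt 2 + (-7/5)*q^3 + (16/45)*q^5*Real.sqrt 2) * hq4


/-- The Torricelli drainage integral `∫ A(h)·h^{-1/2} dh` of the diagonally positioned
unit cube equals `(8·3^{1/4}/5)·(1 + 3√3 − 4√2)`. -/
theorem cubeDiag_drainage_integral :
    (∫ h in (0:ℝ)..Real.sqrt 3, cubeDiagArea h * (Real.sqrt h)⁻¹) =
      8 * (3:ℝ) ^ ((1:ℝ)/4) / 5 * (1 + 3 * Real.sqrt 3 - 4 * Real.sqrt 2) := by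
  rw [← integral_add_adjacent_intervals (fint1.trans fint2) fint3,
    ← integral_add_adjacent_intervals fint1 fint2, I1, I2, I3,
    show (3:ℝ) ^ ((1:ℝ)/4) = q from rfl, hs3]
  ring
end

section
/- Let H = √(2/3). Then ∫₀^H (3√3/8)·(H − h)²·h^{-1/2} dh = 4·2^{1/4}/(5·3^{3/4}), ∫₀^H (3√3/8)·h²·h^{-1/2} dh = 3^{1/4}/(5·2^{3/4}), and the ratio of the first integral to the second equals 8/3. -/
open intervalIntegral Real

lemma torr_int_rpow {r : ℝ} (hr : -1 < r) (b : ℝ) :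
    ∫ x in (0:ℝ)..b, x ^ r = b ^ (r + 1) / (r + 1) := by
  rw [integral_rpow (Or.inl hr), Real.zero_rpow (by linarith), sub_zero]

lemma torr_sqrt_inv (h : ℝ) (hh : 0 ≤ h) :
    (Real.sqrt h)⁻¹ = h ^ (-(1/2) : ℝ) := by
  rw [Real.sqrt_eq_rpow, ← Real.rpow_neg hh]

lemma torr_h1 (h : ℝ) (hh : 0 ≤ h) :
    h * h ^ (-(1/2) : ℝ) = h ^ ((1:ℝ)/2) := by
  nth_rewrite 1 [← Real.rpow_one h]
  rw [← Real.rpow_add' hh (by norm_num)]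
  norm_num

lemma torr_h2 (h : ℝ) (hh : 0 ≤ h) :
    h ^ 2 * h ^ (-(1/2) : ℝ) = h ^ ((3:ℝ)/2) := by
  rw [← Real.rpow_natCast h 2, ← Real.rpow_add' hh (by norm_num)]
  norm_num

lemma torr_key1 (b : ℝ) (hb : 0 < b) :
    (∫ h in (0:ℝ)..b, 3 * Real.sqrt 3 / 8 * (b - h) ^ 2 * (Real.sqrt h)⁻¹) =
      3 * Real.sqrt 3 / 8 * (16 / 15 * b ^ ((5:ℝ)/2)) := by
  have hcongr : ∀ h ∈ Set.uIcc (0:ℝ) b,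
      3 * Real.sqrt 3 / 8 * (b - h) ^ 2 * (Real.sqrt h)⁻¹ =
      3 * Real.sqrt 3 / 8 *
        (b ^ 2 * h ^ (-(1/2) : ℝ) - 2 * b * h ^ ((1:ℝ)/2) + h ^ ((3:ℝ)/2)) := by
    intro h hmem
    have hh : 0 ≤ h := by
      rcases Set.mem_uIcc.mp hmem with ⟨h1, _⟩ | ⟨h1, _⟩
      · exact h1
      · linarith
    rw [torr_sqrt_inv h hh, ← torr_h1 h hh, ← torr_h2 h hh]
    ring
  rw [intervalIntegral.integral_congr hcongr]
  rw [intervalIntegral.integral_const_mul]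
  have i1 : IntervalIntegrable (fun h : ℝ => h ^ (-(1/2) : ℝ)) MeasureTheory.volume 0 b :=
    intervalIntegral.intervalIntegrable_rpow' (by norm_num)
  have i2 : IntervalIntegrable (fun h : ℝ => h ^ ((1:ℝ)/2)) MeasureTheory.volume 0 b :=
    intervalIntegral.intervalIntegrable_rpow' (by norm_num)
  have i3 : IntervalIntegrable (fun h : ℝ => h ^ ((3:ℝ)/2)) MeasureTheory.volume 0 b :=
    intervalIntegral.intervalIntegrable_rpow' (by norm_num)
  rw [intervalIntegral.integral_add ((i1.const_mul _).sub (i2.const_mul _)) i3,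
      intervalIntegral.integral_sub (i1.const_mul _) (i2.const_mul _),
      intervalIntegral.integral_const_mul, intervalIntegral.integral_const_mul,
      torr_int_rpow (by norm_num) b, torr_int_rpow (by norm_num) b,
      torr_int_rpow (by norm_num) b]
  have e1 : b ^ 2 * (b ^ ((-(1/2):ℝ) + 1) / ((-(1/2):ℝ) + 1)) = 2 * b ^ ((5:ℝ)/2) := by
    rw [← Real.rpow_natCast b 2, ← mul_div_assoc, ← Real.rpow_add hb]
    norm_num
    ring
  have e2 : b * (b ^ (((1:ℝ)/2) + 1) / (((1:ℝ)/2) + 1)) = 2/3 * b ^ ((5:ℝ)/2) := by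
    nth_rewrite 1 [← Real.rpow_one b]
    rw [← mul_div_assoc, ← Real.rpow_add hb]
    norm_num
    ring
  have e3 : b ^ (((3:ℝ)/2) + 1) / (((3:ℝ)/2) + 1) = 2/5 * b ^ ((5:ℝ)/2) := by
    norm_num
    ring
  rw [e1, e3]
  have e2' : 2 * b * (b ^ (((1:ℝ)/2) + 1) / (((1:ℝ)/2) + 1)) = 4/3 * b ^ ((5:ℝ)/2) := by
    rw [mul_assoc, e2]; ring
  rw [e2']
  ring

lemma torr_key2 (b : ℝ) (hb : 0 < b) :
    (∫ h in (0:ℝ)..b, 3 * Real.sqrt 3 / 8 * h ^ 2 * (Real.sqrt h)⁻¹) =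
      3 * Real.sqrt 3 / 8 * (2 / 5 * b ^ ((5:ℝ)/2)) := by
  have hcongr : ∀ h ∈ Set.uIcc (0:ℝ) b,
      3 * Real.sqrt 3 / 8 * h ^ 2 * (Real.sqrt h)⁻¹ =
      3 * Real.sqrt 3 / 8 * h ^ ((3:ℝ)/2) := by
    intro h hmem
    have hh : 0 ≤ h := by
      rcases Set.mem_uIcc.mp hmem with ⟨h1, _⟩ | ⟨h1, _⟩
      · exact h1
      · linarith
    rw [torr_sqrt_inv h hh, mul_assoc, torr_h2 h hh]
  rw [intervalIntegral.integral_congr hcongr, intervalIntegral.integral_const_mul,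
      torr_int_rpow (by norm_num) b]
  norm_num
  ring

/-- For a regular tetrahedron with edge `1` and height `H = √(2/3)`, the drainage
integral with a face down equals `4·2^{1/4}/(5·3^{3/4})`, the drainage integral with a
vertex down equals `3^{1/4}/(5·2^{3/4})`, and their ratio (the Torricelli number of the
regular tetrahedron) equals `8/3`. -/
theorem tetrahedron_torricelli_number :
    (∫ h in (0:ℝ)..Real.sqrt (2/3),
        3 * Real.sqrt 3 / 8 * (Real.sqrt (2/3) - h) ^ 2 * (Real.sqrt h)⁻¹) =
      4 * (2:ℝ) ^ ((1:ℝ)/4) / (5 * (3:ℝ) ^ ((3:ℝ)/4)) ∧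
    (∫ h in (0:ℝ)..Real.sqrt (2/3),
        3 * Real.sqrt 3 / 8 * h ^ 2 * (Real.sqrt h)⁻¹) =
      (3:ℝ) ^ ((1:ℝ)/4) / (5 * (2:ℝ) ^ ((3:ℝ)/4)) ∧
    (∫ h in (0:ℝ)..Real.sqrt (2/3),
        3 * Real.sqrt 3 / 8 * (Real.sqrt (2/3) - h) ^ 2 * (Real.sqrt h)⁻¹) /
      (∫ h in (0:ℝ)..Real.sqrt (2/3),
        3 * Real.sqrt 3 / 8 * h ^ 2 * (Real.sqrt h)⁻¹) = 8 / 3 := by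
  have hb : (0:ℝ) < Real.sqrt (2/3) := Real.sqrt_pos.mpr (by norm_num)
  set X : ℝ := (2:ℝ) ^ ((1:ℝ)/4) with hXdef
  set Y : ℝ := (3:ℝ) ^ ((1:ℝ)/4) with hYdef
  have hX : 0 < X := Real.rpow_pos_of_pos (by norm_num) _
  have hY : 0 < Y := Real.rpow_pos_of_pos (by norm_num) _
  have hX4 : X ^ 4 = 2 := by
    rw [hXdef, ← Real.rpow_natCast _ 4, ← Real.rpow_mul (by norm_num)]
    norm_num
  have hY4 : Y ^ 4 = 3 := by
    rw [hYdef, ← Real.rpow_natCast _ 4, ← Real.rpow_mul (by norm_num)]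
    norm_num
  have hsqrt3 : Real.sqrt 3 = Y ^ 2 := by
    rw [hYdef, ← Real.rpow_natCast _ 2, ← Real.rpow_mul (by norm_num),
        Real.sqrt_eq_rpow]
    norm_num
  have hb52 : Real.sqrt (2/3) ^ ((5:ℝ)/2) = 2 * X / (3 * Y) := by
    rw [Real.sqrt_eq_rpow, ← Real.rpow_mul (by norm_num)]
    have h25 : ((2:ℝ)/3) ^ ((1:ℝ)/2 * (5/2)) = (2:ℝ) ^ ((5:ℝ)/4) / (3:ℝ) ^ ((5:ℝ)/4) := by
      rw [Real.div_rpow (by norm_num) (by norm_num)]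
      norm_num
    rw [h25]
    have h2 : (2:ℝ) ^ ((5:ℝ)/4) = 2 * X := by
      rw [hXdef, show ((5:ℝ)/4) = 1 + 1/4 by norm_num, Real.rpow_add (by norm_num),
          Real.rpow_one]
    have h3 : (3:ℝ) ^ ((5:ℝ)/4) = 3 * Y := by
      rw [hYdef, show ((5:ℝ)/4) = 1 + 1/4 by norm_num, Real.rpow_add (by norm_num),
          Real.rpow_one]
    rw [h2, h3]
  have h234 : (2:ℝ) ^ ((3:ℝ)/4) = X ^ 3 := by
    rw [hXdef, ← Real.rpow_natCast _ 3, ← Real.rpow_mul (by norm_num)]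
    norm_num
  have h334 : (3:ℝ) ^ ((3:ℝ)/4) = Y ^ 3 := by
    rw [hYdef, ← Real.rpow_natCast _ 3, ← Real.rpow_mul (by norm_num)]
    norm_num
  have k1 := torr_key1 _ hb
  have k2 := torr_key2 _ hb
  rw [hb52] at k1 k2
  refine ⟨?_, ?_, ?_⟩
  · rw [k1, hsqrt3, h334]
    field_simp
    linear_combination 160 * hY4
  · rw [k2, hsqrt3, h234]
    field_simp
    linear_combination 4 * hX4
  · rw [k1, k2, hsqrt3]
    rw [div_eq_iff (by positivity)]
    ring
end

section
/- Let s, t ∈ (0, π) with s ≠ t, and define f(u) = (sin(t+u))^{-1/2} + (sin(s+u))^{-1/2} on the set D = {u ∈ ℝ : sin(t+u) > 0 and sin(s+u) > 0}. Let u₀ = π/2 − (s+t)/2. Then u₀ ∈ D and f(u) ≥ f(u₀) for every u ∈ D; that is, f attains its minimum on D at u₀, the rotation angle that makes the chord joining the points (cos t, sin t) and (cos s, sin s) horizontal. -/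
/-!
The sum of the two heights is twice the height of the chord's midpoint, which lies at the
rotation-invariant distance `cos((t - s)/2)` from the origin; so the sum is at most
`2 cos((t - s)/2)`, with both heights equal to `cos((t - s)/2)` when the chord is horizontal.
Since `x ↦ x^{-1/2}` is convex and decreasing, a bound on the sum of the heights bounds the sum of
their reciprocal square roots from below by its value at equal heights.
-/

open Real

lemma four_div_add_le_inv_add_inv {K : Type*} [Field K] [LinearOrder K] [IsStrictOrderedRing K]
    {x y : K} (hx : 0 < x) (hy : 0 < y) : 4 / (x + y) ≤ x⁻¹ + y⁻¹ := by
  rw [inv_add_inv hx.ne' hy.ne', div_le_div_iff₀ (by positivity) (by positivity)]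
  nlinarith [sq_nonneg (x - y)]

lemma sqrt_add_sqrt_le_two_sqrt {a b c : ℝ} (ha : 0 ≤ a) (hb : 0 ≤ b) (habc : a + b ≤ 2 * c) :
    √a + √b ≤ 2 * √c := by
  have hc : 0 ≤ c := by linarith
  nlinarith [sq_sqrt ha, sq_sqrt hb, sq_sqrt hc, sq_nonneg (√a - √b), sq_nonneg (√a + √b - 2 * √c),
    sqrt_nonneg a, sqrt_nonneg b, sqrt_nonneg c]

lemma two_mul_inv_sqrt_le_inv_sqrt_add_inv_sqrt {a b c : ℝ} (ha : 0 < a) (hb : 0 < b)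
    (habc : a + b ≤ 2 * c) : 2 * (√c)⁻¹ ≤ (√a)⁻¹ + (√b)⁻¹ := by
  have hsa : 0 < √a := sqrt_pos.mpr ha
  have hsb : 0 < √b := sqrt_pos.mpr hb
  calc 2 * (√c)⁻¹ = 4 / (2 * √c) := by field_simp; norm_num
    _ ≤ 4 / (√a + √b) := by
      gcongr
      exact sqrt_add_sqrt_le_two_sqrt ha.le hb.le habc
    _ ≤ (√a)⁻¹ + (√b)⁻¹ := four_div_add_le_inv_add_inv hsa hsb

lemma sin_add_sin_le_two_cos {x y : ℝ} (h : 0 ≤ cos ((x - y) / 2)) :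
    sin x + sin y ≤ 2 * cos ((x - y) / 2) := by
  rw [sin_add_sin]
  nlinarith [sin_le_one ((x + y) / 2)]

theorem rotation_min_of_inv_sqrt_sin_general
    (s t : ℝ) (hs : s ∈ Set.Ioo 0 π) (ht : t ∈ Set.Ioo 0 π) :
    (π / 2 - (s + t) / 2) ∈ {u : ℝ | 0 < Real.sin (t + u) ∧ 0 < Real.sin (s + u)} ∧
    ∀ u ∈ {u : ℝ | 0 < Real.sin (t + u) ∧ 0 < Real.sin (s + u)},
      (Real.sqrt (Real.sin (t + (π / 2 - (s + t) / 2))))⁻¹ +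
        (Real.sqrt (Real.sin (s + (π / 2 - (s + t) / 2))))⁻¹ ≤
      (Real.sqrt (Real.sin (t + u)))⁻¹ + (Real.sqrt (Real.sin (s + u)))⁻¹ := by
  have hcos : 0 < cos ((t - s) / 2) :=
    cos_pos_of_mem_Ioo ⟨by linarith [hs.2, ht.1], by linarith [hs.1, ht.2]⟩
  have height_t : sin (t + (π / 2 - (s + t) / 2)) = cos ((t - s) / 2) := by
    rw [show t + (π / 2 - (s + t) / 2) = π / 2 - -((t - s) / 2) by ring, sin_pi_div_two_sub,
      cos_neg]
  have height_s : sin (s + (π / 2 - (s + t) / 2)) = cos ((t - s) / 2) := by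
    rw [show s + (π / 2 - (s + t) / 2) = π / 2 - (t - s) / 2 by ring, sin_pi_div_two_sub]
  refine ⟨⟨height_t ▸ hcos, height_s ▸ hcos⟩, fun u ⟨hu_t, hu_s⟩ => ?_⟩
  rw [height_t, height_s]
  have heights_le : sin (t + u) + sin (s + u) ≤ 2 * cos ((t - s) / 2) := by
    simpa only [add_sub_add_right_eq_sub] using sin_add_sin_le_two_cos (x := t + u) (y := s + u)
      (by simpa only [add_sub_add_right_eq_sub] using hcos.le)
  linarith [two_mul_inv_sqrt_le_inv_sqrt_add_inv_sqrt hu_t hu_s heights_le]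

/-- For two distinct points `(cos t, sin t)` and `(cos s, sin s)` on the unit circle in
the open upper half-plane, the function
`f(u) = (sin(t+u))^{-1/2} + (sin(s+u))^{-1/2}`, defined on
`D = {u | sin(t+u) > 0 ∧ sin(s+u) > 0}`, attains its minimum on `D` at
`u₀ = π/2 − (s+t)/2`, the rotation angle making the chord `PQ` horizontal. -/
theorem rotation_min_of_inv_sqrt_sin
    (s t : ℝ) (hs : s ∈ Set.Ioo 0 π) (ht : t ∈ Set.Ioo 0 π) (hst : s ≠ t) :
    (π / 2 - (s + t) / 2) ∈ {u : ℝ | 0 < Real.sin (t + u) ∧ 0 < Real.sin (s + u)} ∧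
    ∀ u ∈ {u : ℝ | 0 < Real.sin (t + u) ∧ 0 < Real.sin (s + u)},
      (Real.sqrt (Real.sin (t + (π / 2 - (s + t) / 2))))⁻¹ +
        (Real.sqrt (Real.sin (s + (π / 2 - (s + t) / 2))))⁻¹ ≤
      (Real.sqrt (Real.sin (t + u)))⁻¹ + (Real.sqrt (Real.sin (s + u)))⁻¹ :=
  rotation_min_of_inv_sqrt_sin_general s t hs ht
end

section
/- Let g : [0,1] → ℝ be a continuous, non-decreasing function with g(1) > g(0). Then ∫₀¹ g(1 − t²) dt > ∫₀¹ g(t²) dt. -/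
/-!
After the substitution `t ↦ 1 - t` the claim compares `g ((1 - t)²)` with `g (1 - t²)`, and
`(1 - t)² ≤ 1 - t²` on `[0, 1]`, so monotonicity gives `≤` pointwise; it remains to find one
point where the inequality is strict. Writing `x = (1 - c)²`, the two arguments are `x` and
`2√x - x`, which exceeds `x` for `x ∈ (0, 1)`, so strictness holds at the last point `x` of a
sublevel set `{g ≤ g x₀}` with `0 < x₀` and `g x₀ < g 1`. Since `g 0 < g 1`, either
`g (1/2) < g 1`, or `g 0 < g (1/2)`, which is the first case for `x ↦ -g (1 - x)`.
-/

open Set intervalIntegral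

theorem ContinuousOn.exists_mem_Ico_forall_Ioc_lt {g : ℝ → ℝ} {a b : ℝ}
    (hg : ContinuousOn g (Icc a b)) (hab : a ≤ b) (hlt : g a < g b) :
    ∃ q ∈ Ico a b, ∀ y ∈ Ioc q b, g q < g y := by
  set S := Icc a b ∩ g ⁻¹' Iic (g a)
  have hS_bdd : BddAbove S := ⟨b, fun x hx => hx.1.2⟩
  have hq : sSup S ∈ S :=
    (hg.preimage_isClosed_of_isClosed isClosed_Icc isClosed_Iic).csSup_mem
      ⟨a, ⟨le_rfl, hab⟩, le_refl (g a)⟩ hS_bdd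
  refine ⟨sSup S, ⟨hq.1.1, lt_of_le_of_ne hq.1.2 ?_⟩, fun y hy => ?_⟩
  · intro h
    exact (h ▸ hq.2 : g b ≤ g a).not_gt hlt
  · by_contra! hy'
    have hyS : y ∈ S := ⟨⟨hq.1.1.trans hy.1.le, hy.2⟩, hy'.trans hq.2⟩
    exact (le_csSup hS_bdd hyS).not_gt hy.1

theorem sq_one_sub_le_one_sub_sq {t : ℝ} (ht : t ∈ Icc 0 1) : (1 - t) ^ 2 ≤ 1 - t ^ 2 := by
  nlinarith [ht.1, ht.2]

theorem exists_lt_comp_one_sub_sq_of_lt {g : ℝ → ℝ} {x : ℝ}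
    (hg : ContinuousOn g (Icc x 1)) (hx : 0 < x) (hx1 : x ≤ 1) (hlt : g x < g 1) :
    ∃ c ∈ Icc (0 : ℝ) 1, g ((1 - c) ^ 2) < g (1 - c ^ 2) := by
  obtain ⟨q, ⟨hxq, hq1⟩, hq⟩ := hg.exists_mem_Ico_forall_Ioc_lt hx1 hlt
  have hs0 : 0 < √q := Real.sqrt_pos.2 (hx.trans_le hxq)
  have hs1 : √q < 1 := (Real.sqrt_lt' one_pos).2 (by simpa using hq1)
  have hsq : √q ^ 2 = q := Real.sq_sqrt (hx.trans_le hxq).le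
  refine ⟨1 - √q, ⟨by linarith, by linarith⟩, ?_⟩
  rw [sub_sub_cancel, hsq]
  exact hq _ ⟨by nlinarith, by nlinarith⟩

theorem exists_lt_comp_one_sub_sq {g : ℝ → ℝ} (hg : ContinuousOn g (Icc 0 1)) (hlt : g 0 < g 1) :
    ∃ c ∈ Icc (0 : ℝ) 1, g ((1 - c) ^ 2) < g (1 - c ^ 2) := by
  have hg_half : ContinuousOn g (Icc (1 / 2) 1) := hg.mono (Icc_subset_Icc_left (by norm_num))
  rcases lt_or_ge (g (1 / 2)) (g 1) with hright | hleft
  · exact exists_lt_comp_one_sub_sq_of_lt hg_half (by norm_num) (by norm_num) hright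
  · have hrefl : ContinuousOn (fun x => -g (1 - x)) (Icc (1 / 2) 1) :=
      (hg.comp (by fun_prop) fun x hx => ⟨by linarith [hx.2], by linarith [hx.1]⟩).neg
    obtain ⟨c, ⟨hc0, hc1⟩, hc⟩ := exists_lt_comp_one_sub_sq_of_lt hrefl (by norm_num) (by norm_num)
      (by norm_num; linarith)
    refine ⟨1 - c, ⟨by linarith, by linarith⟩, ?_⟩
    rw [show 1 - (1 - c ^ 2) = (1 - (1 - c)) ^ 2 by ring] at hc
    linarith

/-- For every continuous non-decreasing `g : [0,1] → ℝ` with `g(1) > g(0)`, one has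
`∫₀¹ g(1 − t²) dt > ∫₀¹ g(t²) dt`. -/
theorem integral_g_one_sub_sq_gt (g : ℝ → ℝ)
    (hcont : ContinuousOn g (Set.Icc 0 1))
    (hmono : MonotoneOn g (Set.Icc 0 1))
    (hlt : g 0 < g 1) :
    (∫ t in (0:ℝ)..1, g (t ^ 2)) < ∫ t in (0:ℝ)..1, g (1 - t ^ 2) := by
  have hmaps₁ : MapsTo (fun t : ℝ => (1 - t) ^ 2) (Icc 0 1) (Icc 0 1) := fun t ht =>
    ⟨sq_nonneg _, (sq_one_sub_le_one_sub_sq ht).trans (sub_le_self _ (sq_nonneg t))⟩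
  have hmaps₂ : MapsTo (fun t : ℝ => 1 - t ^ 2) (Icc 0 1) (Icc 0 1) := fun t ht =>
    ⟨(sq_nonneg _).trans (sq_one_sub_le_one_sub_sq ht), sub_le_self _ (sq_nonneg t)⟩
  have hreflect : (∫ t in (0:ℝ)..1, g (t ^ 2)) = ∫ t in (0:ℝ)..1, g ((1 - t) ^ 2) := by
    simp [integral_comp_sub_left fun t => g (t ^ 2)]
  rw [hreflect]
  exact integral_lt_integral_of_continuousOn_of_le_of_exists_lt one_pos
    (hcont.comp (by fun_prop) hmaps₁) (hcont.comp (by fun_prop) hmaps₂)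
    (fun t ht => hmono (hmaps₁ (Ioc_subset_Icc_self ht)) (hmaps₂ (Ioc_subset_Icc_self ht))
      (sq_one_sub_le_one_sub_sq (Ioc_subset_Icc_self ht)))
    (exists_lt_comp_one_sub_sq hcont hlt)
end

section
/- Let g : [0,1] → ℝ be continuous. Then ∫₀¹ g(s²) ds = ∫₀¹ g(1 − s²) ds if and only if ∫₀^{π/4} [g(cos²t) − g(sin²t)] · cos(π/4 + t) dt = 0. -/
open Real

lemma turnUp_subst (G : ℝ → ℝ) (hG : ContinuousOn G (Set.Icc 0 1)) :
    (∫ s in (0:ℝ)..1, G s) = ∫ t in (0:ℝ)..(π/2), Real.cos t • G (Real.sin t) := by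
  have h : ∀ x ∈ Set.uIcc (0:ℝ) (π/2), HasDerivAt Real.sin (Real.cos x) x :=
    fun x _ => Real.hasDerivAt_sin x
  have h' : ContinuousOn Real.cos (Set.uIcc (0:ℝ) (π/2)) := Real.continuous_cos.continuousOn
  have himg : Real.sin '' Set.uIcc (0:ℝ) (π/2) ⊆ Set.Icc 0 1 := by
    rintro _ ⟨x, hx, rfl⟩
    rw [Set.uIcc_of_le (by positivity)] at hx
    exact ⟨Real.sin_nonneg_of_nonneg_of_le_pi hx.1
      (hx.2.trans (by linarith [Real.pi_pos])), Real.sin_le_one x⟩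
  have := intervalIntegral.integral_comp_smul_deriv' h h' (hG.mono himg)
  rw [Real.sin_zero, Real.sin_pi_div_two] at this
  exact this.symm

/-- For a continuous `g : [0,1] → ℝ`, the equality `∫₀¹ g(s²) ds = ∫₀¹ g(1 − s²) ds`
(i.e. turn-up number `ρ = 1` for the associated solid of revolution) holds if and only
if `∫₀^{π/4} [g(cos²t) − g(sin²t)]·cos(π/4 + t) dt = 0`. -/
theorem turnUp_number_one_characterization (g : ℝ → ℝ)
    (hcont : ContinuousOn g (Set.Icc 0 1)) :
    (∫ s in (0:ℝ)..1, g (s ^ 2)) = (∫ s in (0:ℝ)..1, g (1 - s ^ 2)) ↔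
      (∫ t in (0:ℝ)..(π / 4),
        (g (Real.cos t ^ 2) - g (Real.sin t ^ 2)) * Real.cos (π / 4 + t)) = 0 := by
  have hsqmem : ∀ s ∈ Set.Icc (0:ℝ) 1, s ^ 2 ∈ Set.Icc (0:ℝ) 1 := by
    intro s hs
    exact ⟨sq_nonneg s, pow_le_one₀ hs.1 hs.2⟩
  have hG1 : ContinuousOn (fun s : ℝ => g (s ^ 2)) (Set.Icc 0 1) :=
    hcont.comp ((continuous_pow 2).continuousOn) hsqmem
  have hG2 : ContinuousOn (fun s : ℝ => g (1 - s ^ 2)) (Set.Icc 0 1) := by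
    refine hcont.comp (Continuous.continuousOn (by continuity)) ?_
    intro s hs
    have := hsqmem s hs
    simp only [Set.mem_Icc] at this ⊢
    constructor <;> linarith
  -- substitute s = sin t in both integrals
  have e1 : (∫ s in (0:ℝ)..1, g (s ^ 2))
      = ∫ t in (0:ℝ)..(π/2), Real.cos t * g (Real.sin t ^ 2) := by
    simpa [smul_eq_mul] using turnUp_subst (fun s => g (s ^ 2)) hG1
  have e2 : (∫ s in (0:ℝ)..1, g (1 - s ^ 2))
      = ∫ t in (0:ℝ)..(π/2), Real.cos t * g (Real.cos t ^ 2) := by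
    have := turnUp_subst (fun s => g (1 - s ^ 2)) hG2
    simp only [smul_eq_mul] at this
    rw [this]
    apply intervalIntegral.integral_congr
    intro t _
    simp only
    rw [show (1:ℝ) - Real.sin t ^ 2 = Real.cos t ^ 2 by
      have := Real.sin_sq_add_cos_sq t; linarith]
  -- integrability on [0, π/2] of the combined integrand
  have hFcont : Continuous (fun t : ℝ => Real.sin t ^ 2) := by continuity
  have hFcont' : Continuous (fun t : ℝ => Real.cos t ^ 2) := by continuity
  have hmem1 : ∀ t : ℝ, Real.sin t ^ 2 ∈ Set.Icc (0:ℝ) 1 :=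
    fun t => ⟨sq_nonneg _, Real.sin_sq_le_one t⟩
  have hmem2 : ∀ t : ℝ, Real.cos t ^ 2 ∈ Set.Icc (0:ℝ) 1 :=
    fun t => ⟨sq_nonneg _, Real.cos_sq_le_one t⟩
  have hgs : Continuous (fun t : ℝ => g (Real.sin t ^ 2)) :=
    hcont.comp_continuous hFcont hmem1
  have hgc : Continuous (fun t : ℝ => g (Real.cos t ^ 2)) :=
    hcont.comp_continuous hFcont' hmem2
  set F : ℝ → ℝ := fun t => Real.cos t * (g (Real.sin t ^ 2) - g (Real.cos t ^ 2)) with hF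
  have hFc : Continuous F := Real.continuous_cos.mul (hgs.sub hgc)
  have hGc : Continuous (fun t : ℝ => Real.sin t * (g (Real.cos t ^ 2) - g (Real.sin t ^ 2))) :=
    Real.continuous_sin.mul (hgc.sub hgs)
  -- difference of the two integrals
  have hD : (∫ s in (0:ℝ)..1, g (s ^ 2)) - (∫ s in (0:ℝ)..1, g (1 - s ^ 2))
      = ∫ t in (0:ℝ)..(π/2), F t := by
    rw [e1, e2, ← intervalIntegral.integral_sub (f := fun t => Real.cos t * g (Real.sin t ^ 2))
      (g := fun t => Real.cos t * g (Real.cos t ^ 2))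
      ((Real.continuous_cos.mul hgs).intervalIntegrable _ _)
      ((Real.continuous_cos.mul hgc).intervalIntegrable _ _)]
    apply intervalIntegral.integral_congr
    intro t _
    simp only [hF]
    ring
  -- split at π/4
  have hsplit : (∫ t in (0:ℝ)..(π/2), F t)
      = (∫ t in (0:ℝ)..(π/4), F t) + ∫ t in (π/4:ℝ)..(π/2), F t :=
    (intervalIntegral.integral_add_adjacent_intervals
      (hFc.intervalIntegrable _ _) (hFc.intervalIntegrable _ _)).symm
  -- reflect the second half
  have hrefl : (∫ t in (π/4:ℝ)..(π/2), F t)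
      = ∫ x in (0:ℝ)..(π/4), Real.sin x * (g (Real.cos x ^ 2) - g (Real.sin x ^ 2)) := by
    have h := intervalIntegral.integral_comp_sub_left (a := (0:ℝ)) (b := π/4) F (π/2)
    rw [show π/2 - π/4 = π/4 by ring, sub_zero] at h
    rw [← h]
    apply intervalIntegral.integral_congr
    intro x _
    simp only [hF, Real.cos_pi_div_two_sub, Real.sin_pi_div_two_sub]
  have hs2 : Real.sqrt 2 * Real.sqrt 2 = 2 := Real.mul_self_sqrt (by norm_num)
  -- key identity
  have key : (∫ s in (0:ℝ)..1, g (s ^ 2)) - (∫ s in (0:ℝ)..1, g (1 - s ^ 2))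
      = -Real.sqrt 2 * ∫ t in (0:ℝ)..(π / 4),
          (g (Real.cos t ^ 2) - g (Real.sin t ^ 2)) * Real.cos (π / 4 + t) := by
    rw [hD, hsplit, hrefl, ← intervalIntegral.integral_const_mul,
      ← intervalIntegral.integral_add (hFc.intervalIntegrable _ _)
        (hGc.intervalIntegrable _ _)]
    apply intervalIntegral.integral_congr
    intro x _
    simp only [hF, Real.cos_add, Real.cos_pi_div_four, Real.sin_pi_div_four]
    linear_combination ((g (Real.cos x ^ 2) - g (Real.sin x ^ 2)) * (Real.cos x - Real.sin x) / 2) * hs2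
  have hne : -Real.sqrt 2 ≠ 0 := by
    have : (0:ℝ) < Real.sqrt 2 := Real.sqrt_pos.mpr (by norm_num)
    linarith
  constructor
  · intro h
    have h0 : -Real.sqrt 2 * (∫ t in (0:ℝ)..(π / 4),
        (g (Real.cos t ^ 2) - g (Real.sin t ^ 2)) * Real.cos (π / 4 + t)) = 0 := by
      rw [← key, h, sub_self]
    exact (mul_eq_zero.mp h0).resolve_left hne
  · intro h
    have := key
    rw [h, mul_zero, sub_eq_zero] at this
    exact this
end

section
/- Let g(y) = 29y²(1 − y) + 33y(1 − y)⁴ for y ∈ [0,1]. Then ∫₀¹ g(s²) ds = 302/105 and ∫₀¹ g(1 − s²) ds = 302/105; in particular the two integrals are equal. -/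
theorem integral_zero_one_sum_mul_pow {ι : Type*} (t : Finset ι) (c : ι → ℝ) (k : ι → ℕ) :
    ∫ s in (0:ℝ)..1, ∑ i ∈ t, c i * s ^ k i = ∑ i ∈ t, c i / (k i + 1) := by
  rw [intervalIntegral.integral_finsetSum fun i _ ↦
    (intervalIntegral.intervalIntegrable_pow (k i)).const_mul (c i)]
  refine Finset.sum_congr rfl fun i _ ↦ ?_
  rw [intervalIntegral.integral_const_mul, integral_pow]
  simp [div_eq_mul_inv]

/-- For `g(y) = 29y²(1 − y) + 33y(1 − y)⁴`, both `∫₀¹ g(s²) ds` and `∫₀¹ g(1 − s²) ds`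
equal `302/105`; in particular the two integrals are equal, so the associated
asymmetrical solid of revolution has turn-up number `1`. -/
theorem asymmetric_clepsydra_g :
    (∫ s in (0:ℝ)..1,
      (29 * (s ^ 2) ^ 2 * (1 - s ^ 2) + 33 * s ^ 2 * (1 - s ^ 2) ^ 4)) = 302 / 105 ∧
    (∫ s in (0:ℝ)..1,
      (29 * (1 - s ^ 2) ^ 2 * (1 - (1 - s ^ 2)) +
        33 * (1 - s ^ 2) * (1 - (1 - s ^ 2)) ^ 4)) = 302 / 105 := by
  constructor
  · calc _ = ∫ s in (0:ℝ)..1, ∑ i, ![33, -103, 169, -132, 33] i * s ^ ![2, 4, 6, 8, 10] i := by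
          congr 1; funext s; simp only [Fin.sum_univ_five, Matrix.cons_val]; ring
      _ = 302 / 105 := by
          rw [integral_zero_one_sum_mul_pow]
          norm_num [Fin.sum_univ_succ]
  · calc _ = ∫ s in (0:ℝ)..1, ∑ i, ![29, -58, 29, 33, -33] i * s ^ ![2, 4, 6, 8, 10] i := by
          congr 1; funext s; simp only [Fin.sum_univ_five, Matrix.cons_val]; ring
      _ = 302 / 105 := by
          rw [integral_zero_one_sum_mul_pow]
          norm_num [Fin.sum_univ_succ]
end

section
/- Let g(y) = 29y²(1 − y) + 33y(1 − y)⁴ for y ∈ [0,1]. Then ∫₀¹ g(y)·y dy = 247/140 and ∫₀¹ g(1 − y)·y dy = 184/105, and 247/140 − 184/105 = 1/84 > 0; thus the two orientations of the corresponding solid of revolution have different potential energies even though their Torricelli drainage times are equal. -/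
/-- For `g(y) = 29y²(1 − y) + 33y(1 − y)⁴`, the potential-energy integrals of the two
orientations are `∫₀¹ g(y)·y dy = 247/140` and `∫₀¹ g(1 − y)·y dy = 184/105`, which
differ by `1/84 > 0`: the two orientations have different potential energies even
though their Torricelli drainage times are equal. -/
theorem asymmetric_clepsydra_potential_energy :
    (∫ y in (0:ℝ)..1,
      (29 * y ^ 2 * (1 - y) + 33 * y * (1 - y) ^ 4) * y) = 247 / 140 ∧
    (∫ y in (0:ℝ)..1,
      (29 * (1 - y) ^ 2 * (1 - (1 - y)) + 33 * (1 - y) * (1 - (1 - y)) ^ 4) * y) =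
        184 / 105 ∧
    (247 / 140 - 184 / 105 : ℝ) = 1 / 84 ∧ (0 : ℝ) < 1 / 84 := by
  refine ⟨?_, ?_, by norm_num, by norm_num⟩
  · have h : ∀ y ∈ Set.uIcc (0:ℝ) 1,
        HasDerivAt (fun y : ℝ => 11*y^3 - 103/4*y^4 + 169/5*y^5 - 22*y^6 + 33/7*y^7)
          ((29 * y ^ 2 * (1 - y) + 33 * y * (1 - y) ^ 4) * y) y := by
      intro y _
      have := (((((hasDerivAt_pow 3 y).const_mul 11).sub
        ((hasDerivAt_pow 4 y).const_mul (103/4))).add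
        ((hasDerivAt_pow 5 y).const_mul (169/5))).sub
        ((hasDerivAt_pow 6 y).const_mul 22)).add
        ((hasDerivAt_pow 7 y).const_mul (33/7))
      refine this.congr_deriv ?_; push_cast; ring
    rw [intervalIntegral.integral_eq_sub_of_hasDerivAt h
      (Continuous.intervalIntegrable (by continuity) 0 1)]
    norm_num
  · have h : ∀ y ∈ Set.uIcc (0:ℝ) 1,
        HasDerivAt (fun y : ℝ => 29/3*y^3 - 29/2*y^4 + 29/5*y^5 + 11/2*y^6 - 33/7*y^7)
          ((29 * (1 - y) ^ 2 * (1 - (1 - y)) + 33 * (1 - y) * (1 - (1 - y)) ^ 4) * y) y := by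
      intro y _
      have := (((((hasDerivAt_pow 3 y).const_mul (29/3)).sub
        ((hasDerivAt_pow 4 y).const_mul (29/2))).add
        ((hasDerivAt_pow 5 y).const_mul (29/5))).add
        ((hasDerivAt_pow 6 y).const_mul (11/2))).sub
        ((hasDerivAt_pow 7 y).const_mul (33/7))
      refine this.congr_deriv ?_; push_cast; ring
    rw [intervalIntegral.integral_eq_sub_of_hasDerivAt h
      (Continuous.intervalIntegrable (by continuity) 0 1)]
    norm_num
end

section
/- Let G(y) = 13y²(1 − y)⁶ + 9y³(1 − y)² for y ∈ [0,1]. Then ∫₀¹ G(s²) ds = ∫₀¹ G(1 − s²) ds. -/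
/-! The difference of the two integrands is the derivative of the polynomial
`(2/15) s⁵ (1 - s²)³ (26 s⁴ - 27 s² + 6)`, which vanishes at both `s = 0` and `s = 1`. -/

open Polynomial intervalIntegral

theorem Polynomial.integral_derivative_eval (p : ℝ[X]) (a b : ℝ) :
    ∫ x in a..b, p.derivative.eval x = p.eval b - p.eval a :=
  integral_eq_sub_of_hasDerivAt (fun x _ => p.hasDerivAt x)
    (p.derivative.continuous.intervalIntegrable a b)

/-- For `G(y) = 13y²(1 − y)⁶ + 9y³(1 − y)²`, one has
`∫₀¹ G(s²) ds = ∫₀¹ G(1 − s²) ds`, so the associated asymmetrical solid of revolution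
has turn-up number `1`. -/
theorem asymmetric_clepsydra_G :
    (∫ s in (0:ℝ)..1,
      (13 * (s ^ 2) ^ 2 * (1 - s ^ 2) ^ 6 + 9 * (s ^ 2) ^ 3 * (1 - s ^ 2) ^ 2)) =
    (∫ s in (0:ℝ)..1,
      (13 * (1 - s ^ 2) ^ 2 * (1 - (1 - s ^ 2)) ^ 6 +
        9 * (1 - s ^ 2) ^ 3 * (1 - (1 - s ^ 2)) ^ 2)) := by
  let P : ℝ[X] := C (2 / 15) * X ^ 5 * (1 - X ^ 2) ^ 3 * (C 26 * X ^ 4 - C 27 * X ^ 2 + C 6)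
  have hP : ∀ s : ℝ,
      (13 * (s ^ 2) ^ 2 * (1 - s ^ 2) ^ 6 + 9 * (s ^ 2) ^ 3 * (1 - s ^ 2) ^ 2) -
        (13 * (1 - s ^ 2) ^ 2 * (1 - (1 - s ^ 2)) ^ 6 +
          9 * (1 - s ^ 2) ^ 3 * (1 - (1 - s ^ 2)) ^ 2) = P.derivative.eval s := by
    intro s
    simp only [P, derivative_mul, derivative_sub, derivative_add, derivative_pow, derivative_C,
      derivative_X, derivative_one, eval_mul, eval_add, eval_sub, eval_pow, eval_C, eval_X,
      eval_one, eval_zero]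
    ring
  rw [← sub_eq_zero, ← integral_sub
    ((by fun_prop : Continuous _).intervalIntegrable _ _)
    ((by fun_prop : Continuous _).intervalIntegrable _ _)]
  simp only [hP, integral_derivative_eval]
  simp [P]
end
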